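/- arXiv:1902.07143 — 4 statements merged into one kernel-verified Lean document; each statement's English description precedes it below -/
import Mathlib

section
/- There is no element u in the ring ℤ[i, 1/√2] (the subring of ℂ generated by i and 1/√2) such that (1 - 2i)·u = 1 + 2i. -/
open Complex

noncomputable def ZiSqrt2Inv : Subring ℂ :=
  Subring.closure {Complex.I, ((Real.sqrt 2 : ℂ))⁻¹}

def P (z : ℂ) : Prop :=
  ∃ (a b c d : ℤ) (k : ℕ),
    (2:ℂ)^k * z = a + b * Complex.I + ((c:ℂ) + d * Complex.I) * (Real.sqrt 2 : ℂ)

lemma mem_P {z : ℂ} (hz : z ∈ ZiSqrt2Inv) : P z := by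
  have hs : ((Real.sqrt 2 : ℂ))^2 = 2 := by
    rw [← Complex.ofReal_pow]
    norm_cast
    exact Real.sq_sqrt (by norm_num)
  refine Subring.closure_induction ?_ ?_ ?_ ?_ ?_ ?_ hz
  · rintro x (rfl | rfl)
    · exact ⟨0, 1, 0, 0, 0, by push_cast; ring⟩
    · refine ⟨0, 0, 1, 0, 1, ?_⟩
      push_cast
      have h0 : (Real.sqrt 2 : ℂ) ≠ 0 := by
        simpa using (Real.sqrt_pos.mpr (by norm_num : (0:ℝ) < 2)).ne'
      field_simp
      linear_combination -hs
  · exact ⟨0, 0, 0, 0, 0, by push_cast; ring⟩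
  · exact ⟨1, 0, 0, 0, 0, by push_cast; ring⟩
  · rintro x y _ _ ⟨a1,b1,c1,d1,k1,hx⟩ ⟨a2,b2,c2,d2,k2,hy⟩
    refine ⟨2^k2*a1+2^k1*a2, 2^k2*b1+2^k1*b2, 2^k2*c1+2^k1*c2, 2^k2*d1+2^k1*d2, k1+k2, ?_⟩
    push_cast
    linear_combination ((2:ℂ)^k2) * hx + ((2:ℂ)^k1) * hy
  · rintro x _ ⟨a,b,c,d,k,hx⟩
    exact ⟨-a,-b,-c,-d,k, by push_cast; linear_combination -hx⟩
  · rintro x y _ _ ⟨a1,b1,c1,d1,k1,hx⟩ ⟨a2,b2,c2,d2,k2,hy⟩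
    refine ⟨a1*a2 - b1*b2 + 2*(c1*c2 - d1*d2), a1*b2 + b1*a2 + 2*(c1*d2 + d1*c2),
      a1*c2 + c1*a2 - b1*d2 - d1*b2, a1*d2 + d1*a2 + b1*c2 + c1*b2, k1+k2, ?_⟩
    push_cast
    linear_combination ((2:ℂ)^k2 * y) * hx
      + ((a1:ℂ) + b1*Complex.I + ((c1:ℂ)+d1*Complex.I)*(Real.sqrt 2 : ℂ)) * hy
      + (((c1:ℂ)+d1*Complex.I)*((c2:ℂ)+d2*Complex.I)) * hs
      + (((b1:ℂ)*b2 + 2*d1*d2 + ((b1:ℂ)*d2 + d1*b2)*(Real.sqrt 2 : ℂ))) * Complex.I_sq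

theorem no_solution_in_ZiSqrt2Inv :
    ¬ ∃ u ∈ ZiSqrt2Inv, (1 - 2 * Complex.I) * u = 1 + 2 * Complex.I := by
  rintro ⟨u, hu, heq⟩
  obtain ⟨a, b, c, d, k, hP⟩ := mem_P hu
  -- u = (-3 + 4i)/5
  have h5 : (5:ℂ) ≠ 0 := by norm_num
  have hu' : u = (-3 + 4*Complex.I)/5 := by
    have hne : (1 - 2*Complex.I) ≠ 0 := by
      intro h
      have := congrArg Complex.re h
      simp at this
    field_simp
    linear_combination (1 + 2*Complex.I) * heq + (4*u + 4) * Complex.I_sq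
  rw [hu'] at hP
  have h2 : (2:ℂ)^k = (((2:ℝ)^k : ℝ) : ℂ) := by push_cast; ring
  have hr : ((2:ℂ)^k).re = (2:ℝ)^k := by rw [h2, Complex.ofReal_re]
  have hi : ((2:ℂ)^k).im = 0 := by rw [h2, Complex.ofReal_im]
  have hre := congrArg Complex.re hP
  simp [Complex.add_re, Complex.mul_re, Complex.div_re, Complex.ofReal_re,
    Complex.ofReal_im, Complex.normSq, hr, hi] at hre
  rcases eq_or_ne c 0 with hc | hc
  · subst hc
    push_cast at hre
    have h5 : (5:ℤ) ∣ 3 * 2^k := by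
      refine ⟨-a, ?_⟩
      have : (3 * 2^k : ℝ) = ((5 * -a : ℤ) : ℝ) := by push_cast; linarith
      exact_mod_cast this
    have hp : Prime (5:ℤ) := by norm_num
    rcases hp.dvd_mul.mp h5 with h | h
    · norm_num at h
    · have := hp.dvd_of_dvd_pow h
      norm_num at this
  · have hirr : Irrational ((a:ℝ) + c * Real.sqrt 2) :=
      (irrational_sqrt_two.intCast_mul hc).intCast_add a
    rw [← hre] at hirr
    exact hirr ⟨(2:ℚ)^k * (-3/5), by push_cast; ring⟩
end

section
/- For any finite-dimensional complex Hilbert spaces and linear maps f : A → B ⊗ X and g : A → B ⊗ Y, if there exist isometries u : X → Z and v : Y → Z with (id_B ⊗ u) ∘ f = (id_B ⊗ v) ∘ g, then Tr_X(f ρ f†) = Tr_Y(g ρ g†) for every operator ρ on A. -/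
/-!
Conjugating the traced factor by an isometry does not change the partial trace: the entries of
`Tr_Z ((1 ⊗ u) M (1 ⊗ u)†)` are `∑ p q, M (i, p) (j, q) (u† u) q p`, and `u† u = 1`.
Hence both sides equal `Tr_Z (F ρ F†)` for the common map `F = (1 ⊗ u) f = (1 ⊗ v) g`.
-/

open Matrix Kronecker

/-- Partial trace over the second tensor factor. -/
noncomputable def ptrace {b x : Type*} [Fintype x] (M : Matrix (b × x) (b × x) ℂ) :
    Matrix b b ℂ :=
  fun i j => ∑ k : x, M (i, k) (j, k)

theorem ptrace_one_kronecker_mul_mul_conjTranspose {b x z : Type*} [Fintype b] [Fintype x]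
    [Fintype z] [DecidableEq b] [DecidableEq x] {u w : Matrix z x ℂ} (hwu : wᴴ * u = 1)
    (M : Matrix (b × x) (b × x) ℂ) :
    ptrace (((1 : Matrix b b ℂ) ⊗ₖ u) * M * ((1 : Matrix b b ℂ) ⊗ₖ w)ᴴ) = ptrace M := by
  ext i j
  have hδ (p q : x) : ∑ k, star (w k q) * u k p = if q = p then 1 else 0 := by
    simpa [mul_apply, one_apply] using congr_fun₂ hwu q p
  calc ptrace (((1 : Matrix b b ℂ) ⊗ₖ u) * M * ((1 : Matrix b b ℂ) ⊗ₖ w)ᴴ) i j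
      = ∑ k, ∑ q, ∑ p, u k p * M (i, p) (j, q) * star (w k q) := by
        simp only [ptrace, mul_apply, conjTranspose_apply, kroneckerMap_apply, one_apply,
          Fintype.sum_prod_type, ite_mul, one_mul, zero_mul, apply_ite star, star_zero, mul_ite,
          mul_zero, Finset.sum_ite_irrel, Finset.sum_const_zero, Finset.sum_ite_eq,
          Finset.mem_univ, if_true, Finset.sum_mul]
    _ = ∑ q, ∑ p, M (i, p) (j, q) * ∑ k, star (w k q) * u k p := by
        simp only [Finset.mul_sum]
        rw [Finset.sum_comm_cycle (f := fun q p k => M (i, p) (j, q) * (star (w k q) * u k p))]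
        congr! 3
        ring
    _ = ptrace M i j := by
        simp only [hδ, mul_ite, mul_one, mul_zero, Finset.sum_ite_eq, Finset.mem_univ, if_true,
          ptrace]

theorem Matrix.mul_mul_mul_conjTranspose_eq {α m n l : Type*} [NonUnitalSemiring α] [StarRing α]
    [Fintype n] [Fintype l] (A : Matrix m n α) (f : Matrix n l α) (ρ : Matrix l l α) :
    A * (f * ρ * fᴴ) * Aᴴ = A * f * ρ * (A * f)ᴴ := by
  simp only [conjTranspose_mul, Matrix.mul_assoc]

/-- If `(1_B ⊗ u) f = (1_B ⊗ v) g` for isometries `u`, `v`, then the induced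
completely positive maps agree: `Tr_X (f ρ f†) = Tr_Y (g ρ g†)` for all `ρ`. -/
theorem iso_rel_implies_cp_rel
    {a b x y z : Type*} [Fintype a] [Fintype b] [Fintype x] [Fintype y] [Fintype z]
    [DecidableEq b] [DecidableEq x] [DecidableEq y]
    (f : Matrix (b × x) a ℂ) (g : Matrix (b × y) a ℂ)
    (u : Matrix z x ℂ) (v : Matrix z y ℂ)
    (hu : uᴴ * u = 1) (hv : vᴴ * v = 1)
    (h : ((1 : Matrix b b ℂ) ⊗ₖ u) * f = ((1 : Matrix b b ℂ) ⊗ₖ v) * g) :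
    ∀ ρ : Matrix a a ℂ, ptrace (f * ρ * fᴴ) = ptrace (g * ρ * gᴴ) := by
  intro ρ
  calc ptrace (f * ρ * fᴴ)
      = ptrace (((1 : Matrix b b ℂ) ⊗ₖ u) * (f * ρ * fᴴ) * ((1 : Matrix b b ℂ) ⊗ₖ u)ᴴ) :=
        (ptrace_one_kronecker_mul_mul_conjTranspose hu _).symm
    _ = ptrace (((1 : Matrix b b ℂ) ⊗ₖ v) * (g * ρ * gᴴ) * ((1 : Matrix b b ℂ) ⊗ₖ v)ᴴ) := by
        rw [mul_mul_mul_conjTranspose_eq, mul_mul_mul_conjTranspose_eq, h]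
    _ = ptrace (g * ρ * gᴴ) := ptrace_one_kronecker_mul_mul_conjTranspose hv _
end

section
/- For finite-dimensional complex Hilbert spaces, if two linear maps f : A → B ⊗ X and g : A → B ⊗ Y satisfy Tr_X(f ρ f†) = Tr_Y(g ρ g†) for all operators ρ on A, then there exist a Hilbert space Z and isometries u : X → Z, v : Y → Z such that (id_B ⊗ u) ∘ f = (id_B ⊗ v) ∘ g. -/
open Matrix Kronecker
open scoped InnerProductSpace

lemma toEuclideanLin_mul' {m n p : Type*} [Fintype m] [Fintype n] [Fintype p]
    [DecidableEq n] [DecidableEq p]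
    (M : Matrix m n ℂ) (N : Matrix n p ℂ) :
    toEuclideanLin (M * N) = (toEuclideanLin M).comp (toEuclideanLin N) := by
  simp [toEuclideanLin_eq_toLin, Matrix.toLin_mul _ (PiLp.basisFun 2 ℂ n) _]

lemma toEuclideanLin_one' {m : Type*} [Fintype m] [DecidableEq m] :
    toEuclideanLin (1 : Matrix m m ℂ) = LinearMap.id := by
  simp [toEuclideanLin_eq_toLin, Matrix.toLin_one]

lemma exists_isometry_mat {m n : Type*} [Fintype m] [Fintype n] [DecidableEq m] [DecidableEq n]
    (A B : Matrix m n ℂ) (h : Aᴴ * A = Bᴴ * B) :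
    ∃ W : Matrix m m ℂ, Wᴴ * W = 1 ∧ W * A = B := by
  set T := toEuclideanLin A with hT
  set S := toEuclideanLin B with hS
  have hnorm : ∀ ξ : EuclideanSpace ℂ n, ‖T ξ‖ = ‖S ξ‖ := by
    intro ξ
    have hh : LinearMap.adjoint T ∘ₗ T = LinearMap.adjoint S ∘ₗ S := by
      have := congrArg Matrix.toEuclideanLin h
      rwa [toEuclideanLin_mul', toEuclideanLin_mul',
        Matrix.toEuclideanLin_conjTranspose_eq_adjoint,
        Matrix.toEuclideanLin_conjTranspose_eq_adjoint] at this
    have h1 : (⟪T ξ, T ξ⟫_ℂ : ℂ) = ⟪S ξ, S ξ⟫_ℂ := by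
      rw [← LinearMap.adjoint_inner_right, ← LinearMap.adjoint_inner_right]
      simpa only [LinearMap.comp_apply] using
        congrArg (fun L : EuclideanSpace ℂ n →ₗ[ℂ] EuclideanSpace ℂ n => ⟪ξ, L ξ⟫_ℂ) hh
    rw [@norm_eq_sqrt_re_inner ℂ, @norm_eq_sqrt_re_inner ℂ, h1]
  have hker : LinearMap.ker T ≤ LinearMap.ker S := by
    intro ξ hξ
    simp only [LinearMap.mem_ker] at hξ ⊢
    have := hnorm ξ
    rw [hξ, norm_zero] at this
    exact norm_eq_zero.mp this.symm
  let φ : LinearMap.range T →ₗ[ℂ] EuclideanSpace ℂ m :=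
    ((LinearMap.ker T).liftQ S hker).comp (T.quotKerEquivRange.symm.toLinearMap)
  have hφ : ∀ ξ : EuclideanSpace ℂ n, ∀ hm, φ ⟨T ξ, hm⟩ = S ξ := by
    intro ξ hm
    simp only [φ, LinearMap.comp_apply, LinearEquiv.coe_coe]
    rw [LinearMap.quotKerEquivRange_symm_apply_image T ξ hm]
    simp [Submodule.mkQ_apply]
  have hφn : ∀ w : LinearMap.range T, ‖φ w‖ = ‖w‖ := by
    rintro ⟨w, hw⟩
    obtain ⟨ξ, rfl⟩ := hw
    erw [hφ ξ (LinearMap.mem_range_self T ξ)]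
    simp [← hnorm ξ]
  let ι : LinearMap.range T →ₗᵢ[ℂ] EuclideanSpace ℂ m := ⟨φ, hφn⟩
  let W' := ι.extend
  refine ⟨toEuclideanLin.symm W'.toLinearMap, ?_, ?_⟩
  · apply toEuclideanLin.injective
    rw [toEuclideanLin_mul', toEuclideanLin_one',
      Matrix.toEuclideanLin_conjTranspose_eq_adjoint, LinearEquiv.apply_symm_apply]
    refine LinearMap.ext fun ξ => ?_
    apply ext_inner_left ℂ
    intro v
    rw [LinearMap.comp_apply, LinearMap.adjoint_inner_right]
    simpa using W'.inner_map_map v ξ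
  · apply toEuclideanLin.injective
    rw [toEuclideanLin_mul', LinearEquiv.apply_symm_apply]
    refine LinearMap.ext fun ξ => ?_
    have : W' (T ξ) = S ξ := by
      have := ι.extend_apply ⟨T ξ, LinearMap.mem_range_self T ξ⟩
      rw [this]
      exact hφ ξ _
    exact this

/-- Essential uniqueness of Stinespring dilations: if the induced CP maps of `f` and `g`
agree, then `f` and `g` are intertwined by isometries into a common ancilla space. -/
theorem cp_rel_implies_iso_rel
    {a b x y : ℕ}
    (f : Matrix (Fin b × Fin x) (Fin a) ℂ) (g : Matrix (Fin b × Fin y) (Fin a) ℂ)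
    (h : ∀ ρ : Matrix (Fin a) (Fin a) ℂ, ptrace (f * ρ * fᴴ) = ptrace (g * ρ * gᴴ)) :
    ∃ (z : ℕ) (u : Matrix (Fin z) (Fin x) ℂ) (v : Matrix (Fin z) (Fin y) ℂ),
      uᴴ * u = 1 ∧ vᴴ * v = 1 ∧
      ((1 : Matrix (Fin b) (Fin b) ℂ) ⊗ₖ u) * f = ((1 : Matrix (Fin b) (Fin b) ℂ) ⊗ₖ v) * g := by
  classical
  have hgram : ∀ (i j : Fin b) (p q : Fin a),
      ∑ k : Fin x, f (i,k) p * star (f (j,k) q)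
        = ∑ l : Fin y, g (i,l) p * star (g (j,l) q) := by
    intro i j p q
    have h' := congrFun (congrFun (h (Matrix.single p q 1)) i) j
    simpa [ptrace, Matrix.mul_apply, Matrix.single, Matrix.conjTranspose_apply,
      Finset.sum_mul, Finset.mul_sum, ite_mul, mul_ite, ite_and, Finset.sum_ite_eq,
      Finset.sum_ite_eq'] using h'
  set A : Matrix (Fin x ⊕ Fin y) (Fin b × Fin a) ℂ :=
    Matrix.of (Sum.elim (fun k c => f (c.1, k) c.2) (fun _ _ => 0)) with hA
  set Bm : Matrix (Fin x ⊕ Fin y) (Fin b × Fin a) ℂ :=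
    Matrix.of (Sum.elim (fun _ _ => 0) (fun l c => g (c.1, l) c.2)) with hBm
  have hABgram : Aᴴ * A = Bmᴴ * Bm := by
    ext c c'
    simp only [Matrix.mul_apply, Matrix.conjTranspose_apply, Fintype.sum_sum_type, hA, hBm,
      Matrix.of_apply, Sum.elim_inl, Sum.elim_inr, star_zero, zero_mul, mul_zero,
      Finset.sum_const_zero, add_zero, zero_add]
    have := hgram c'.1 c.1 c'.2 c.2
    calc ∑ k : Fin x, star (f (c.1, k) c.2) * f (c'.1, k) c'.2
        = ∑ k : Fin x, f (c'.1, k) c'.2 * star (f (c.1, k) c.2) := by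
          simp [mul_comm]
      _ = ∑ l : Fin y, g (c'.1, l) c'.2 * star (g (c.1, l) c.2) := this
      _ = ∑ l : Fin y, star (g (c.1, l) c.2) * g (c'.1, l) c'.2 := by
          simp [mul_comm]
  obtain ⟨W, hW1, hW2⟩ := exists_isometry_mat A Bm hABgram
  set u' : Matrix (Fin x ⊕ Fin y) (Fin x) ℂ := W.submatrix id Sum.inl with hu'def
  set v' : Matrix (Fin x ⊕ Fin y) (Fin y) ℂ :=
    (1 : Matrix (Fin x ⊕ Fin y) (Fin x ⊕ Fin y) ℂ).submatrix id Sum.inr with hv'def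
  have hu' : u'ᴴ * u' = 1 := by
    ext k k'
    have := congrFun (congrFun hW1 (Sum.inl k)) (Sum.inl k')
    simpa [Matrix.mul_apply, Matrix.conjTranspose_apply, Matrix.one_apply, hu'def,
      Sum.inl.injEq] using this
  have hv' : v'ᴴ * v' = 1 := by
    ext l l'
    simp [Matrix.mul_apply, Matrix.conjTranspose_apply, Matrix.one_apply, hv'def,
      Fintype.sum_sum_type, Sum.inr.injEq, apply_ite, Finset.sum_ite_eq]
  have hkey : ∀ (i : Fin b) (s : Fin x ⊕ Fin y) (p : Fin a),
      ∑ k : Fin x, u' s k * f (i, k) p = ∑ l : Fin y, v' s l * g (i, l) p := by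
    intro i s p
    have hws := congrFun (congrFun hW2 s) (i, p)
    rw [Matrix.mul_apply] at hws
    simp only [Fintype.sum_sum_type, hA, Matrix.of_apply, Sum.elim_inl, Sum.elim_inr,
      mul_zero, Finset.sum_const_zero, add_zero] at hws
    have hlhs : ∑ k : Fin x, u' s k * f (i, k) p = Bm s (i, p) := by
      rw [← hws]; rfl
    rw [hlhs]
    cases s with
    | inl k => simp [hBm, hv'def, Matrix.one_apply]
    | inr l => simp [hBm, hv'def, Matrix.one_apply, Sum.inr.injEq, Finset.sum_ite_eq]
  refine ⟨x + y, u'.submatrix finSumFinEquiv.symm id, v'.submatrix finSumFinEquiv.symm id,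
    ?_, ?_, ?_⟩
  · ext k k'
    have e1 : ∀ F : Fin x ⊕ Fin y → ℂ, ∑ m : Fin (x + y), F (finSumFinEquiv.symm m)
        = ∑ s : Fin x ⊕ Fin y, F s := fun F => Equiv.sum_comp finSumFinEquiv.symm F
    have := congrFun (congrFun hu' k) k'
    rw [Matrix.mul_apply] at this ⊢
    simp only [Matrix.conjTranspose_apply, Matrix.submatrix_apply, id_eq] at this ⊢
    rw [e1 (fun s => star (u' s k) * u' s k')]
    exact this
  · ext l l'
    have e1 : ∀ F : Fin x ⊕ Fin y → ℂ, ∑ m : Fin (x + y), F (finSumFinEquiv.symm m)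
        = ∑ s : Fin x ⊕ Fin y, F s := fun F => Equiv.sum_comp finSumFinEquiv.symm F
    have := congrFun (congrFun hv' l) l'
    rw [Matrix.mul_apply] at this ⊢
    simp only [Matrix.conjTranspose_apply, Matrix.submatrix_apply, id_eq] at this ⊢
    rw [e1 (fun s => star (v' s l) * v' s l')]
    exact this
  · ext im p
    obtain ⟨i, m⟩ := im
    rw [Matrix.mul_apply, Matrix.mul_apply]
    simp only [Fintype.sum_prod_type, Matrix.kroneckerMap_apply, Matrix.submatrix_apply,
      id_eq, Matrix.one_apply, ite_mul, one_mul, zero_mul, mul_ite, mul_zero,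
      Finset.sum_ite_irrel, Finset.sum_const_zero, Finset.sum_ite_eq, Finset.mem_univ, if_true]
    exact hkey i (finSumFinEquiv.symm m) p
end

section
/- For any linear map f : ℂ^a → ℂ^b ⊗ ℂ^c, the superoperator ρ ↦ Tr_{ℂ^c}(f ρ f†) on operators is completely positive; conversely (Stinespring/Kraus), every completely positive map Φ : M_a(ℂ) → M_b(ℂ) is of this form for some c and some linear f : ℂ^a → ℂ^b ⊗ ℂ^c. -/
open Matrix ComplexOrder

/-- The action of `id_m ⊗ Φ` on a block matrix. -/
noncomputable def matTensorId {a b : ℕ} (m : ℕ)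
    (Φ : Matrix (Fin a) (Fin a) ℂ → Matrix (Fin b) (Fin b) ℂ)
    (ρ : Matrix (Fin m × Fin a) (Fin m × Fin a) ℂ) :
    Matrix (Fin m × Fin b) (Fin m × Fin b) ℂ :=
  fun p q => Φ (fun k l => ρ (p.1, k) (q.1, l)) p.2 q.2

def IsCompletelyPositive {a b : ℕ}
    (Φ : Matrix (Fin a) (Fin a) ℂ → Matrix (Fin b) (Fin b) ℂ) : Prop :=
  ∀ (m : ℕ) (ρ : Matrix (Fin m × Fin a) (Fin m × Fin a) ℂ),
    ρ.PosSemidef → (matTensorId m Φ ρ).PosSemidef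

/-- The partial trace of a positive semidefinite matrix is positive semidefinite. -/
lemma ptrace_posSemidef {n x : Type*} [Fintype n] [Fintype x] [DecidableEq x]
    {M : Matrix (n × x) (n × x) ℂ} (hM : M.PosSemidef) : (ptrace M).PosSemidef := by
  refine PosSemidef.of_dotProduct_mulVec_nonneg ?_ ?_
  · ext i j
    simp only [conjTranspose_apply, ptrace, star_sum]
    exact Finset.sum_congr rfl fun k _ => hM.1.apply (i, k) (j, k)
  · intro y
    have key : star y ⬝ᵥ (ptrace M) *ᵥ y
        = ∑ k : x, star (fun jl : n × x => if jl.2 = k then y jl.1 else 0) ⬝ᵥ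
            M *ᵥ (fun jl : n × x => if jl.2 = k then y jl.1 else 0) := by
      simp only [dotProduct, mulVec, ptrace, Pi.star_apply, Fintype.sum_prod_type,
        apply_ite (star : ℂ → ℂ), star_zero, mul_ite, mul_zero, ite_mul, zero_mul,
        Finset.sum_ite_eq', Finset.mem_univ, if_true]
      simp only [Finset.mul_sum, Finset.sum_mul]
      simp only [Finset.sum_comm (s := (Finset.univ : Finset n))
        (t := (Finset.univ : Finset x))]
    rw [key]
    exact Finset.sum_nonneg fun k _ => hM.dotProduct_mulVec_nonneg _

lemma matTensorId_ptrace_eq {a b c m : ℕ} (f : Matrix (Fin b × Fin c) (Fin a) ℂ)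
    (ρ : Matrix (Fin m × Fin a) (Fin m × Fin a) ℂ) :
    matTensorId m (fun ρ => ptrace (f * ρ * fᴴ)) ρ =
      ptrace ((Matrix.of fun (p : (Fin m × Fin b) × Fin c) (q : Fin m × Fin a) =>
          if p.1.1 = q.1 then f (p.1.2, p.2) q.2 else 0) * ρ *
        (Matrix.of fun (p : (Fin m × Fin b) × Fin c) (q : Fin m × Fin a) =>
          if p.1.1 = q.1 then f (p.1.2, p.2) q.2 else 0)ᴴ) := by
  ext p q
  simp only [matTensorId]
  rw [show (fun k l => ρ (p.1, k) (q.1, l)) = Matrix.of (fun k l => ρ (p.1, k) (q.1, l)) from rfl]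
  simp only [matTensorId, ptrace, mul_apply, conjTranspose_apply, of_apply,
    Fintype.sum_prod_type,
    ite_mul, zero_mul, mul_ite, mul_zero, apply_ite (star : ℂ → ℂ), star_zero,
    Finset.sum_ite_eq, Finset.sum_ite_eq', Finset.mem_univ, if_true,
    Finset.sum_mul, Finset.mul_sum, Finset.sum_ite_irrel, Finset.sum_const_zero]

open scoped MatrixOrder in
lemma posSemidef_iff_eq_transpose_mul_self {n : Type*} [Fintype n] {A : Matrix n n ℂ} :
    A.PosSemidef ↔ ∃ (B : Matrix n n ℂ), A = Bᴴ * B :=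
  ⟨fun h => by
    classical
    obtain ⟨B, hB⟩ := CStarAlgebra.nonneg_iff_eq_star_mul_self.mp h.nonneg
    exact ⟨B, hB⟩, fun ⟨B, hB⟩ => hB ▸ posSemidef_conjTranspose_mul_self B⟩

/-- Stinespring: the superoperators `ρ ↦ Tr_c (f ρ f†)` are completely positive, and
conversely every completely positive linear map is of this form. -/
theorem stinespring {a b : ℕ} :
    (∀ (c : ℕ) (f : Matrix (Fin b × Fin c) (Fin a) ℂ),
      IsCompletelyPositive (fun (ρ : Matrix (Fin a) (Fin a) ℂ) => ptrace (f * ρ * fᴴ))) ∧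
    (∀ Φ : Matrix (Fin a) (Fin a) ℂ →ₗ[ℂ] Matrix (Fin b) (Fin b) ℂ,
      IsCompletelyPositive (⇑Φ) →
      ∃ (c : ℕ) (f : Matrix (Fin b × Fin c) (Fin a) ℂ),
        ∀ ρ, Φ ρ = ptrace (f * ρ * fᴴ)) := by
  constructor
  · intro c f m ρ hρ
    rw [matTensorId_ptrace_eq]
    exact ptrace_posSemidef (hρ.mul_mul_conjTranspose_same _)
  · intro Φ hΦ
    classical
    set v : Fin a × Fin a → ℂ := fun p => if p.1 = p.2 then 1 else 0 with hv
    set N : Matrix (Fin 1) (Fin a × Fin a) ℂ := Matrix.of fun _ p => star (v p) with hN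
    have hEpsd : (Nᴴ * N).PosSemidef := posSemidef_conjTranspose_mul_self _
    obtain ⟨B, hB⟩ := posSemidef_iff_eq_transpose_mul_self.mp (hΦ a (Nᴴ * N) hEpsd)
    refine ⟨a * b, Matrix.of fun pk i => star (B (finProdFinEquiv.symm pk.2) (i, pk.1)),
      fun ρ => ?_⟩
    have hC : ∀ (i j : Fin a) (p q : Fin b),
        Φ (Matrix.single i j 1) p q
          = ∑ r : Fin a × Fin b, star (B r (i, p)) * B r (j, q) := by
      intro i j p q
      have h1 : (fun k l => (Nᴴ * N) (i, k) (j, l)) = Matrix.single i j 1 := by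
        ext k l
        simp only [hN, hv, mul_apply, conjTranspose_apply, of_apply, star_star,
          Finset.univ_unique, Finset.sum_singleton, apply_ite (star : ℂ → ℂ), star_one,
          star_zero]
        by_cases h1 : i = k <;> by_cases h2 : j = l <;>
          simp [h1, h2, Matrix.single]
      have h2 := congrFun (congrFun hB (i, p)) (j, q)
      have h3 : matTensorId a (⇑Φ) (Nᴴ * N) (i, p) (j, q) = Φ (Matrix.single i j 1) p q := by
        simp only [matTensorId, h1]
      rw [← h3, h2, mul_apply]
      exact Finset.sum_congr rfl fun r _ => by rw [conjTranspose_apply]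
    ext p q
    have hrhs : (ptrace ((Matrix.of fun pk i => star (B (finProdFinEquiv.symm pk.2) (i, pk.1)))
        * ρ * (Matrix.of fun pk i => star (B (finProdFinEquiv.symm pk.2) (i, pk.1)))ᴴ)) p q
        = ∑ i, ∑ j, ρ i j * ∑ r : Fin a × Fin b, star (B r (i, p)) * B r (j, q) := by
      simp only [ptrace, mul_apply, conjTranspose_apply, of_apply, star_star,
        Finset.sum_mul, Finset.mul_sum]
      rw [← Fintype.sum_equiv finProdFinEquiv
        (fun r => ∑ x_1 : Fin a, ∑ i : Fin a, star (B r (i, p)) * ρ i x_1 * B r (x_1, q))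
        (fun k => ∑ x_1 : Fin a, ∑ i : Fin a,
          star (B (finProdFinEquiv.symm k) (i, p)) * ρ i x_1
            * B (finProdFinEquiv.symm k) (x_1, q))
        (fun r => by simp)]
      conv_rhs => rw [Finset.sum_comm]
      rw [Finset.sum_comm (s := (Finset.univ : Finset (Fin a × Fin b)))]
      refine Finset.sum_congr rfl fun j _ => ?_
      rw [Finset.sum_comm (s := (Finset.univ : Finset (Fin a × Fin b)))]
      exact Finset.sum_congr rfl fun i _ => Finset.sum_congr rfl fun r _ => by ring
    rw [hrhs]
    conv_lhs => rw [matrix_eq_sum_single ρ]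
    rw [map_sum, Matrix.sum_apply]
    refine Finset.sum_congr rfl fun i _ => ?_
    rw [map_sum, Matrix.sum_apply]
    refine Finset.sum_congr rfl fun j _ => ?_
    rw [show Matrix.single i j (ρ i j) = ρ i j • Matrix.single i j (1 : ℂ) by
      rw [smul_single, smul_eq_mul, mul_one], LinearMap.map_smul]
    simp only [Matrix.smul_apply, smul_eq_mul]
    rw [hC]
end
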